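/- arXiv:1612.05137 — 6 statements merged into one kernel-verified Lean document; each statement's English description precedes it below -/
import Mathlib

section
/- The class of finite nonempty linear orders with monotone surjections has the amalgamation property: given finite nonempty linear orders A, B, C and monotone surjections φ : B → A and ψ : C → A, there exist a finite linear order D and monotone surjections θ : D → B, ρ : D → C such that φ ∘ θ = ψ ∘ ρ. -/
section Aux

variable {α β : Type} [LinearOrder β] [Fintype β] [DecidableEq α]

/-- The fiber of `f` over `a`, as a finset. -/
def fibS (f : β → α) (a : α) : Finset β := Finset.univ.filter (fun x => f x = a)

/-- The rank of `b` within its fiber. -/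
def rkS (f : β → α) (b : β) : ℕ :=
  (Finset.univ.filter (fun x => f x = f b ∧ x < b)).card

lemma rkS_lt (f : β → α) (b : β) : rkS f b < (fibS f (f b)).card := by
  apply Finset.card_lt_card
  constructor
  · intro x hx
    simp only [rkS, fibS, Finset.mem_filter, Finset.mem_univ, true_and] at hx ⊢
    exact hx.1
  · intro h
    have hb : b ∈ fibS f (f b) := by simp [fibS]
    have := h hb
    simp at this

lemma rkS_strictMono (f : β → α) {b b' : β} (hf : f b = f b') (h : b < b') :
    rkS f b < rkS f b' := by
  apply Finset.card_lt_card
  constructor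
  · intro x hx
    simp only [Finset.mem_filter, Finset.mem_univ, true_and] at hx ⊢
    exact ⟨hx.1.trans hf, hx.2.trans h⟩
  · intro hsub
    have hb : b ∈ Finset.univ.filter (fun x => f x = f b' ∧ x < b') := by
      simp [hf, h]
    have := hsub hb
    simp at this

lemma rkS_surj (f : β → α) (a : α) (k : ℕ) (hk : k < (fibS f a).card) :
    ∃ b, f b = a ∧ rkS f b = k := by
  have hinj : Set.InjOn (rkS f) (fibS f a) := by
    intro b hb b' hb' h
    simp only [fibS, Finset.coe_filter, Set.mem_setOf_eq, Finset.mem_univ, true_and] at hb hb'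
    rcases lt_trichotomy b b' with h1 | h1 | h1
    · exact absurd h (rkS_strictMono f (hb.trans hb'.symm) h1).ne
    · exact h1
    · exact absurd h.symm (rkS_strictMono f (hb'.trans hb.symm) h1).ne
  have himg : (fibS f a).image (rkS f) = Finset.range (fibS f a).card := by
    apply Finset.eq_of_subset_of_card_le
    · intro x hx
      simp only [Finset.mem_image] at hx
      obtain ⟨b, hb, rfl⟩ := hx
      have hba : f b = a := by
        simpa [fibS] using hb
      rw [Finset.mem_range]
      have := rkS_lt f b
      rwa [hba] at this
    · rw [Finset.card_range, Finset.card_image_of_injOn hinj]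
  have : k ∈ (fibS f a).image (rkS f) := by
    rw [himg, Finset.mem_range]; exact hk
  simp only [Finset.mem_image] at this
  obtain ⟨b, hb, hbk⟩ := this
  exact ⟨b, by simpa [fibS] using hb, hbk⟩

end Aux

/-- Amalgamation property for finite nonempty linear orders with monotone surjections. -/
theorem stmt_2 {A B C : Type} [LinearOrder A] [LinearOrder B] [LinearOrder C]
    [Fintype A] [Fintype B] [Fintype C] [Nonempty A] [Nonempty B] [Nonempty C]
    (φ : B → A) (ψ : C → A)
    (hφs : Function.Surjective φ) (hφm : Monotone φ)
    (hψs : Function.Surjective ψ) (hψm : Monotone ψ) :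
    ∃ (D : Type) (lo : LinearOrder D) (_ : Finite D) (θ : D → B) (ρ : D → C),
      Function.Surjective θ ∧ Function.Surjective ρ ∧
      (@Monotone D B lo.toPreorder _ θ) ∧ (@Monotone D C lo.toPreorder _ ρ) ∧
      φ ∘ θ = ψ ∘ ρ := by
  classical
  -- D is the "staircase" subset of the fiber product
  set P : B × C → Prop := fun p =>
    φ p.1 = ψ p.2 ∧
      min (rkS φ p.1) ((fibS ψ (ψ p.2)).card - 1)
        = min (rkS ψ p.2) ((fibS φ (φ p.1)).card - 1) with hP
  refine ⟨{p : B × C // P p}, LinearOrder.lift' (fun d => toLex d.1)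
      (fun d d' h => Subtype.ext (toLex.injective h)), Subtype.finite,
      fun d => d.1.1, fun d => d.1.2, ?_, ?_, ?_, ?_, ?_⟩
  · -- surjectivity of θ
    intro b
    obtain ⟨c₀, hc₀⟩ := hψs (φ b)
    have hn : 0 < (fibS ψ (φ b)).card := by
      refine Finset.card_pos.mpr ⟨c₀, ?_⟩
      simp [fibS, hc₀]
    obtain ⟨c, hc, hrk⟩ := rkS_surj ψ (φ b)
        (min (rkS φ b) ((fibS ψ (φ b)).card - 1)) (by omega)
    have hbm := rkS_lt φ b
    refine ⟨⟨(b, c), hc.symm, ?_⟩, rfl⟩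
    simp only [hc, hrk]
    omega
  · -- surjectivity of ρ
    intro c
    obtain ⟨b₀, hb₀⟩ := hφs (ψ c)
    have hm : 0 < (fibS φ (ψ c)).card := by
      refine Finset.card_pos.mpr ⟨b₀, ?_⟩
      simp [fibS, hb₀]
    obtain ⟨b, hb, hrk⟩ := rkS_surj φ (ψ c)
        (min (rkS ψ c) ((fibS φ (ψ c)).card - 1)) (by omega)
    have hcn := rkS_lt ψ c
    refine ⟨⟨(b, c), hb, ?_⟩, rfl⟩
    simp only [hb, hrk]
    omega
  · -- monotonicity of θ
    intro d d' h
    have h' : toLex d.1 ≤ toLex d'.1 := h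
    rw [Prod.Lex.le_iff] at h'
    rcases h' with h' | ⟨h1, _⟩
    · exact h'.le
    · exact h1.le
  · -- monotonicity of ρ
    intro d d' h
    have h' : toLex d.1 ≤ toLex d'.1 := h
    rw [Prod.Lex.le_iff] at h'
    obtain ⟨⟨b, c⟩, hdc, hds⟩ := d
    obtain ⟨⟨b', c'⟩, hdc', hds'⟩ := d'
    simp only at h' hdc hds hdc' hds' ⊢
    rcases h' with hbb | ⟨rfl, hcc⟩
    · -- b < b'
      by_contra hlt
      push_neg at hlt
      -- c' < c : the two pairs lie in the same fiber
      have hfa : φ b = φ b' := by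
        have h1 : φ b ≤ φ b' := hφm hbb.le
        have h2 : ψ c' ≤ ψ c := hψm hlt.le
        rw [← hdc, ← hdc'] at h2
        exact le_antisymm h1 h2
      have hfc : ψ c = ψ c' := by rw [← hdc, ← hdc', hfa]
      have hjj : rkS ψ c' < rkS ψ c := rkS_strictMono ψ hfc.symm hlt
      have hii : rkS φ b < rkS φ b' := rkS_strictMono φ hfa hbb
      have h1 := rkS_lt φ b'
      have h2 := rkS_lt ψ c
      have h3 := rkS_lt ψ c'
      rw [hfc] at h2
      rw [hfa, hfc] at hds
      omega
    · exact hcc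
  · -- commutativity
    funext d
    exact d.2.1
end

section
/- Let (L, ≤) be a linear order that is densely ordered, complete, separable (some countable set meets every nonempty open interval), and has distinct least and greatest elements. Then L, equipped with the order topology, is homeomorphic to the real unit interval [0,1]. -/
/-- A dense, complete, separable linear order with distinct endpoints is, in its
order topology, homeomorphic to the real unit interval. -/
theorem stmt_8 {L : Type*} [LinearOrder L] [DenselyOrdered L]
    [TopologicalSpace L] [OrderTopology L]
    (a b : L) (ha : ∀ x : L, a ≤ x) (hb : ∀ x : L, x ≤ b) (hab : a ≠ b)
    (hcomplete : ∀ S : Set L, S.Nonempty → ∃ x : L, IsLUB S x)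
    (hsep : ∃ S : Set L, S.Countable ∧
      ∀ u v : L, u < v → (S ∩ Set.Ioo u v).Nonempty) :
    Nonempty (L ≃ₜ Set.Icc (0 : ℝ) 1) := by
  classical
  obtain ⟨SS, hSc, hSd⟩ := hsep
  have hab' : a < b := lt_of_le_of_ne (ha b) hab
  set D : Set L := SS ∩ Set.Ioo a b with hD
  have hfill : ∀ u v : L, u < v → ∃ d ∈ D, u < d ∧ d < v := by
    intro u v huv
    obtain ⟨s, hsS, hs⟩ := hSd u v huv
    exact ⟨s, ⟨hsS, lt_of_le_of_lt (ha u) hs.1, lt_of_lt_of_le hs.2 (hb v)⟩, hs.1, hs.2⟩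
  haveI : Countable ↥D := (hSc.mono Set.inter_subset_left).to_subtype
  haveI : Nonempty ↥D := by
    obtain ⟨d, hd, -⟩ := hfill a b hab'; exact ⟨⟨d, hd⟩⟩
  haveI : DenselyOrdered ↥D := by
    constructor
    rintro ⟨x, hx⟩ ⟨y, hy⟩ hxy
    obtain ⟨d, hd, h1, h2⟩ := hfill x y (Subtype.mk_lt_mk.mp hxy)
    exact ⟨⟨d, hd⟩, Subtype.mk_lt_mk.mpr h1, Subtype.mk_lt_mk.mpr h2⟩
  haveI : NoMinOrder ↥D := by
    constructor
    rintro ⟨x, hx⟩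
    obtain ⟨d, hd, -, h2⟩ := hfill a x hx.2.1
    exact ⟨⟨d, hd⟩, Subtype.mk_lt_mk.mpr h2⟩
  haveI : NoMaxOrder ↥D := by
    constructor
    rintro ⟨x, hx⟩
    obtain ⟨d, hd, h1, -⟩ := hfill x b hx.2.2
    exact ⟨⟨d, hd⟩, Subtype.mk_lt_mk.mpr h1⟩
  haveI : Nonempty ↥(Set.Ioo (0:ℚ) 1) := ⟨⟨1/2, by norm_num⟩⟩
  haveI : NoMinOrder ↥(Set.Ioo (0:ℚ) 1) := by
    constructor
    rintro ⟨x, hx⟩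
    obtain ⟨y, hy1, hy2⟩ := exists_between hx.1
    exact ⟨⟨y, hy1, hy2.trans hx.2⟩, Subtype.mk_lt_mk.mpr hy2⟩
  haveI : NoMaxOrder ↥(Set.Ioo (0:ℚ) 1) := by
    constructor
    rintro ⟨x, hx⟩
    obtain ⟨y, hy1, hy2⟩ := exists_between hx.2
    exact ⟨⟨y, hx.1.trans hy1, hy2⟩, Subtype.mk_lt_mk.mpr hy1⟩
  haveI : DenselyOrdered ↥(Set.Ioo (0:ℚ) 1) := by
    constructor
    rintro ⟨x, hx⟩ ⟨y, hy⟩ hxy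
    obtain ⟨z, hz1, hz2⟩ := exists_between (Subtype.mk_lt_mk.mp hxy)
    exact ⟨⟨z, hx.1.trans hz1, hz2.trans hy.2⟩,
      Subtype.mk_lt_mk.mpr hz1, Subtype.mk_lt_mk.mpr hz2⟩
  obtain ⟨g⟩ := Order.iso_of_countable_dense ↥D ↥(Set.Ioo (0:ℚ) 1)
  set q : ↥D → ℝ := fun d => ((g d : ℚ) : ℝ) with hqdef
  have hqmono : StrictMono q := fun d e h => by
    simp only [hqdef]
    exact_mod_cast g.strictMono h
  have hq0 : ∀ d, 0 < q d := fun d => by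
    simp only [hqdef]; exact_mod_cast (g d).2.1
  have hq1 : ∀ d, q d < 1 := fun d => by
    simp only [hqdef]; exact_mod_cast (g d).2.2
  -- inverse: every rational in (0,1) is hit
  have hqsurj : ∀ r : ℚ, 0 < r → r < 1 → ∃ d : ↥D, q d = (r : ℝ) := by
    intro r h0 h1
    exact ⟨g.symm ⟨r, h0, h1⟩, by simp [hqdef]⟩
  set T : L → Set ℝ := fun x => insert 0 {r : ℝ | ∃ d : ↥D, (d : L) ≤ x ∧ r = q d}
    with hTdef
  have hTne : ∀ x, (T x).Nonempty := fun x => ⟨0, Set.mem_insert _ _⟩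
  have hTbdd : ∀ x, ∀ r ∈ T x, r ≤ 1 := by
    rintro x r (rfl | ⟨d, -, rfl⟩)
    · norm_num
    · exact (hq1 d).le
  set F : L → ℝ := fun x => sSup (T x) with hFdef
  have hF0 : ∀ x, 0 ≤ F x := fun x =>
    le_csSup ⟨1, hTbdd x⟩ (Set.mem_insert _ _)
  have hF1 : ∀ x, F x ≤ 1 := fun x => csSup_le (hTne x) (hTbdd x)
  have hqleF : ∀ (d : ↥D) (x : L), (d : L) ≤ x → q d ≤ F x := fun d x hdx =>
    le_csSup ⟨1, hTbdd x⟩ (Set.mem_insert_of_mem _ ⟨d, hdx, rfl⟩)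
  have hFle : ∀ (x : L) (c : ℝ), 0 ≤ c → (∀ d : ↥D, (d : L) ≤ x → q d ≤ c) →
      F x ≤ c := by
    intro x c hc hd
    refine csSup_le (hTne x) ?_
    rintro r (rfl | ⟨d, hdx, rfl⟩)
    · exact hc
    · exact hd d hdx
  have hFmono : StrictMono F := by
    intro x y hxy
    obtain ⟨d2, hd2, hxd2, hd2y⟩ := hfill x y hxy
    obtain ⟨d1, hd1, hxd1, hd1d2⟩ := hfill x d2 hxd2
    have h1 : F x ≤ q ⟨d1, hd1⟩ := by
      refine hFle x _ (hq0 _).le ?_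
      intro d hdx
      exact (hqmono (Subtype.mk_lt_mk.mpr (lt_of_le_of_lt hdx hxd1) :
        d < (⟨d1, hd1⟩ : ↥D))).le
    have h2 : q (⟨d1, hd1⟩ : ↥D) < q ⟨d2, hd2⟩ :=
      hqmono (Subtype.mk_lt_mk.mpr hd1d2)
    have h3 : q (⟨d2, hd2⟩ : ↥D) ≤ F y := hqleF _ _ hd2y.le
    exact lt_of_le_of_lt h1 (lt_of_lt_of_le h2 h3)
  have hrange : Set.range F = Set.Icc (0:ℝ) 1 := by
    apply Set.eq_of_subset_of_subset
    · rintro r ⟨x, rfl⟩; exact ⟨hF0 x, hF1 x⟩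
    · rintro r ⟨hr0, hr1⟩
      rcases eq_or_lt_of_le hr0 with rfl | hr0
      · refine ⟨a, le_antisymm (hFle a 0 le_rfl ?_) (hF0 a)⟩
        intro d hdx
        exact absurd (lt_of_lt_of_le d.2.2.1 hdx) (lt_irrefl a)
      · -- r > 0
        set A : Set L := Subtype.val '' {d : ↥D | q d < r} with hAdef
        have hAne : A.Nonempty := by
          obtain ⟨q0, hq01, hq02⟩ := exists_rat_btwn hr0
          have h0 : (0:ℚ) < q0 := by exact_mod_cast hq01
          have h1 : q0 < 1 := by exact_mod_cast lt_of_lt_of_le hq02 hr1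
          obtain ⟨d0, hd0⟩ := hqsurj q0 h0 h1
          exact ⟨d0, ⟨d0, by rw [Set.mem_setOf_eq, hd0]; exact hq02, rfl⟩⟩
        obtain ⟨x, hx⟩ := hcomplete A hAne
        refine ⟨x, le_antisymm ?_ ?_⟩
        · -- F x ≤ r
          refine hFle x r hr0.le ?_
          intro d hdx
          by_contra hcon
          push_neg at hcon
          obtain ⟨q2, hq21, hq22⟩ := exists_rat_btwn hcon
          have h0 : (0:ℚ) < q2 := by exact_mod_cast hr0.trans hq21
          have h1 : q2 < 1 := by exact_mod_cast hq22.trans (hq1 d)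
          obtain ⟨e, he⟩ := hqsurj q2 h0 h1
          have hub : x ≤ (e : L) := by
            apply hx.2
            rintro z ⟨d', hd', rfl⟩
            have : q d' < q e := by
              rw [he]; exact lt_trans hd' hq21
            exact (hqmono.lt_iff_lt.mp this).le
          have : q d ≤ q e := hqmono.le_iff_le.mpr (hdx.trans hub)
          rw [he] at this
          exact absurd (lt_of_lt_of_le hq22 this) (lt_irrefl _)
        · -- r ≤ F x
          by_contra hcon
          push_neg at hcon
          obtain ⟨q1, hq11, hq12⟩ := exists_rat_btwn hcon
          have h0 : (0:ℚ) < q1 := by exact_mod_cast lt_of_le_of_lt (hF0 x) hq11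
          have h1 : q1 < 1 := by exact_mod_cast lt_of_lt_of_le hq12 hr1
          obtain ⟨d1, hd1⟩ := hqsurj q1 h0 h1
          have hmem : (d1 : L) ∈ A := ⟨d1, by rw [Set.mem_setOf_eq, hd1]; exact hq12, rfl⟩
          have : q d1 ≤ F x := hqleF d1 x (hx.1 hmem)
          rw [hd1] at this
          exact absurd (lt_of_le_of_lt this hq11) (lt_irrefl _)
  have e1 : L ≃o Set.range F := StrictMono.orderIso F hFmono
  have e2 : Set.range F ≃o Set.Icc (0:ℝ) 1 := OrderIso.setCongr _ _ hrange
  exact ⟨(e1.trans e2).toHomeomorph⟩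
end

section
/- Let (D_n)_{n∈ℕ} be a sequence of finite nonempty linear orders and π_n : D_{n+1} → D_n monotone surjections. Let X ⊆ ∏_n D_n be the inverse limit, i.e., the set of threads x with π_n(x_{n+1}) = x_n for all n, ordered pointwise: x ≤ y iff x_n ≤ y_n for all n. Then ≤ is a linear (total) order on X. -/
/-- The pointwise order on the inverse limit of finite nonempty linear orders with
monotone surjective bonding maps is a linear order. -/
theorem stmt_10 (D : ℕ → Type*) [∀ n, LinearOrder (D n)]
    [∀ n, Fintype (D n)] [∀ n, Nonempty (D n)]
    (π : ∀ n, D (n + 1) → D n)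
    (hsurj : ∀ n, Function.Surjective (π n)) (hmono : ∀ n, Monotone (π n)) :
    let X := {x : ∀ n, D n // ∀ n, π n (x (n + 1)) = x n}
    let r : X → X → Prop := fun x y => ∀ n, x.1 n ≤ y.1 n
    (∀ x : X, r x x) ∧
    (∀ x y : X, r x y → r y x → x = y) ∧
    (∀ x y z : X, r x y → r y z → r x z) ∧
    (∀ x y : X, r x y ∨ r y x) := by
  intro X r
  have step : ∀ (x y : X) (n : ℕ), x.1 (n + 1) ≤ y.1 (n + 1) → x.1 n ≤ y.1 n := by
    intro x y n h
    rw [← x.2 n, ← y.2 n]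
    exact hmono n h
  have down : ∀ (x y : X) (k j : ℕ), x.1 (k + j) ≤ y.1 (k + j) → x.1 k ≤ y.1 k := by
    intro x y k j
    induction j with
    | zero => exact id
    | succ j ih => intro h; exact ih (step x y (k + j) h)
  refine ⟨fun x n => le_refl _, ?_, fun x y z hxy hyz n => le_trans (hxy n) (hyz n), ?_⟩
  · intro x y hxy hyx
    exact Subtype.ext (funext fun n => le_antisymm (hxy n) (hyx n))
  · intro x y
    by_contra hc
    obtain ⟨hxy, hyx⟩ := not_or.mp hc
    simp only [r, not_forall, not_le] at hxy hyx
    obtain ⟨n, hn⟩ := hxy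
    obtain ⟨m, hm⟩ := hyx
    rcases le_total n m with h | h
    · obtain ⟨j, rfl⟩ := Nat.exists_eq_add_of_le h
      exact absurd (down x y n j hm.le) (not_le.mpr hn)
    · obtain ⟨j, rfl⟩ := Nat.exists_eq_add_of_le h
      exact absurd (down y x m j hn.le) (not_le.mpr hm)
end

section
/- Let (D_n)_{n∈ℕ} be finite nonempty linear orders with monotone surjective bonding maps, let X be the inverse limit with the pointwise order, and let p_n : X → D_n denote the n-th projection. If x, y ∈ X are consecutive in X (x < y with nothing strictly between), then for every n, either p_n(x) = p_n(y) or p_n(x) and p_n(y) are consecutive in D_n. -/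
section Aux

variable {D : ℕ → Type*}

/-- Downward transition maps of the inverse system (junk when `k > m`). -/
noncomputable def toLe [∀ n, Nonempty (D n)] (π : ∀ n, D (n + 1) → D n) :
    ∀ m, D m → ∀ k, D k
  | 0, d, k => if h : k = 0 then h.symm ▸ d else Classical.arbitrary _
  | m + 1, d, k => if h : k = m + 1 then h.symm ▸ d else toLe π m (π m d) k

variable [∀ n, Nonempty (D n)] (π : ∀ n, D (n + 1) → D n)

lemma toLe_self : ∀ (m : ℕ) (d : D m), toLe π m d m = d := by
  intro m d
  cases m <;> simp [toLe]

lemma toLe_of_le (m k : ℕ) (hk : k ≤ m) (d : D (m + 1)) :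
    toLe π (m + 1) d k = toLe π m (π m d) k := by
  rw [toLe, dif_neg (by omega)]

lemma toLe_thread (f : ∀ n, D n) (hf : ∀ j, π j (f (j + 1)) = f j) :
    ∀ (m k : ℕ), k ≤ m → toLe π m (f m) k = f k := by
  intro m
  induction m with
  | zero => intro k hk; interval_cases k; exact toLe_self π 0 _
  | succ m ih =>
    intro k hk
    rcases eq_or_lt_of_le hk with h | h
    · subst h; exact toLe_self π _ _
    · rw [toLe_of_le π m k (by omega), hf m]
      exact ih k (by omega)

lemma toLe_mono [∀ n, LinearOrder (D n)] (hmono : ∀ n, Monotone (π n)) :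
    ∀ (m k : ℕ), k ≤ m → ∀ d d' : D m, d ≤ d' → toLe π m d k ≤ toLe π m d' k := by
  intro m
  induction m with
  | zero => intro k hk d d' hd; interval_cases k; simpa [toLe_self] using hd
  | succ m ih =>
    intro k hk d d' hd
    rcases eq_or_lt_of_le hk with h | h
    · subst h; simpa [toLe_self] using hd
    · rw [toLe_of_le π m k (by omega), toLe_of_le π m k (by omega)]
      exact ih k (by omega) _ _ (hmono m hd)

lemma toLe_pi : ∀ (m : ℕ) (d : D m) (k : ℕ), k < m →
    π k (toLe π m d (k + 1)) = toLe π m d k := by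
  intro m
  induction m with
  | zero => intro d k hk; omega
  | succ m ih =>
    intro d k hk
    rcases eq_or_lt_of_le (Nat.succ_le_of_lt hk) with h | h
    · -- k + 1 = m + 1
      have hkm : k = m := by omega
      subst hkm
      rw [toLe_self, toLe_of_le π k k le_rfl, toLe_self]
    · rw [toLe_of_le π m (k + 1) (by omega), toLe_of_le π m k (by omega)]
      exact ih _ k (by omega)

/-- Interval lifting along a monotone surjection between linear orders. -/
lemma lift_mem {α β : Type*} [LinearOrder α] [LinearOrder β] (g : α → β)
    (hm : Monotone g) (hs : Function.Surjective g) (x' y' : α) (hxy : x' ≤ y')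
    (c : β) (h1 : g x' ≤ c) (h2 : c ≤ g y') :
    ∃ d, g d = c ∧ x' ≤ d ∧ d ≤ y' := by
  obtain ⟨d, hd⟩ := hs c
  rcases lt_or_ge d x' with h | h
  · exact ⟨x', le_antisymm h1 (hd ▸ hm h.le), le_rfl, hxy⟩
  · rcases lt_or_ge y' d with h' | h'
    · exact ⟨y', le_antisymm (hd ▸ hm h'.le) h2, hxy, le_rfl⟩
    · exact ⟨d, hd, h, h'⟩

end Aux

/-- Projections of an inverse limit of finite nonempty linear orders map consecutive
elements of the limit to equal or consecutive elements of each level. -/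
theorem stmt_13 (D : ℕ → Type*) [∀ n, LinearOrder (D n)]
    [∀ n, Fintype (D n)] [∀ n, Nonempty (D n)]
    (π : ∀ n, D (n + 1) → D n)
    (hsurj : ∀ n, Function.Surjective (π n)) (hmono : ∀ n, Monotone (π n))
    (x y : {x : ∀ n, D n // ∀ n, π n (x (n + 1)) = x n})
    (hxy : x < y)
    (hcons : ¬ ∃ z : {x : ∀ n, D n // ∀ n, π n (x (n + 1)) = x n},
      x < z ∧ z < y) :
    ∀ n, x.1 n = y.1 n ∨
      (x.1 n < y.1 n ∧ ¬ ∃ a : D n, x.1 n < a ∧ a < y.1 n) := by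
  classical
  intro n
  have hle : ∀ m, x.1 m ≤ y.1 m := fun m => hxy.le m
  rcases eq_or_lt_of_le (hle n) with heq | hlt
  · exact Or.inl heq
  refine Or.inr ⟨hlt, ?_⟩
  rintro ⟨a, ha1, ha2⟩
  apply hcons
  -- construct a thread strictly between x and y
  set P : ∀ m, D m → Prop := fun m d =>
    (x.1 m ≤ d ∧ d ≤ y.1 m) ∧ (m ≤ n → d = toLe π n a m) ∧
      (n ≤ m → toLe π m d n = a) with hP
  have hbase : P 0 (toLe π n a 0) := by
    refine ⟨⟨?_, ?_⟩, fun _ => rfl, fun h => ?_⟩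
    · calc x.1 0 = toLe π n (x.1 n) 0 := (toLe_thread π x.1 x.2 n 0 (Nat.zero_le _)).symm
        _ ≤ toLe π n a 0 := toLe_mono π hmono n 0 (Nat.zero_le _) _ _ ha1.le
    · calc toLe π n a 0 ≤ toLe π n (y.1 n) 0 := toLe_mono π hmono n 0 (Nat.zero_le _) _ _ ha2.le
        _ = y.1 0 := toLe_thread π y.1 y.2 n 0 (Nat.zero_le _)
    · have hn0 : n = 0 := by omega
      subst hn0
      rw [toLe_self, toLe_self]
  have hstep : ∀ m (d : D m), P m d → ∃ d' : D (m + 1), P (m + 1) d' ∧ π m d' = d := by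
    intro m d hd
    rcases le_or_gt (m + 1) n with hmn | hmn
    · refine ⟨toLe π n a (m + 1), ⟨⟨?_, ?_⟩, fun _ => rfl, fun h => ?_⟩, ?_⟩
      · calc x.1 (m+1) = toLe π n (x.1 n) (m+1) := (toLe_thread π x.1 x.2 n _ hmn).symm
          _ ≤ toLe π n a (m+1) := toLe_mono π hmono n _ hmn _ _ ha1.le
      · calc toLe π n a (m+1) ≤ toLe π n (y.1 n) (m+1) := toLe_mono π hmono n _ hmn _ _ ha2.le
          _ = y.1 (m+1) := toLe_thread π y.1 y.2 n _ hmn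
      · have : n = m + 1 := le_antisymm h hmn
        subst this
        rw [toLe_self, toLe_self]
      · rw [toLe_pi π n a m (by omega)]
        exact (hd.2.1 (by omega)).symm
    · -- n ≤ m : lift d
      have hnm : n ≤ m := by omega
      obtain ⟨d', hd'1, hd'2, hd'3⟩ := lift_mem (π m) (hmono m) (hsurj m)
        (x.1 (m + 1)) (y.1 (m + 1)) (hle (m + 1)) d
        (by rw [x.2 m]; exact hd.1.1) (by rw [y.2 m]; exact hd.1.2)
      refine ⟨d', ⟨⟨hd'2, hd'3⟩, fun h => by omega, fun _ => ?_⟩, hd'1⟩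
      rw [toLe_of_le π m n hnm, hd'1]
      exact hd.2.2 hnm
  choose g hg1 hg2 using hstep
  let f : ∀ m, {d : D m // P m d} := fun m =>
    Nat.rec ⟨toLe π n a 0, hbase⟩ (fun m fm => ⟨g m fm.1 fm.2, hg1 m fm.1 fm.2⟩) m
  have hcompat : ∀ m, π m ((f (m + 1)).1) = (f m).1 := fun m => hg2 m (f m).1 (f m).2
  let z : {x : ∀ n, D n // ∀ n, π n (x (n + 1)) = x n} := ⟨fun m => (f m).1, hcompat⟩
  have hzn : z.1 n = a := by
    have := (f n).2.2.2 le_rfl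
    rwa [toLe_self] at this
  have hxz : x ≤ z := fun m => (f m).2.1.1
  have hzy : z ≤ y := fun m => (f m).2.1.2
  refine ⟨z, lt_of_le_of_ne hxz ?_, lt_of_le_of_ne hzy ?_⟩
  · intro h
    have : x.1 n = a := by rw [h]; exact hzn
    exact absurd this ha1.ne
  · intro h
    have : y.1 n = a := by rw [← h]; exact hzn
    exact absurd this ha2.ne'
end

section
/- Every nonempty compact metric space X is homeomorphic to a quotient of the Cantor space 2^ℕ by a closed equivalence relation; that is, there exists an equivalence relation ≡ on 2^ℕ whose graph is closed in 2^ℕ × 2^ℕ such that the quotient space 2^ℕ/≡ is homeomorphic to X. -/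
open TopologicalSpace Metric Set

/-- remainder sequence for greedy binary expansion -/
noncomputable def binRem (y : ℝ) : ℕ → ℝ
  | 0 => y
  | n + 1 => if (1/2 : ℝ)^(n+1) ≤ binRem y n then binRem y n - (1/2)^(n+1) else binRem y n

/-- greedy binary digits -/
noncomputable def binDig (y : ℝ) (n : ℕ) : Bool := decide ((1/2 : ℝ)^(n+1) ≤ binRem y n)

lemma binRem_bounds {y : ℝ} (h0 : 0 ≤ y) (h1 : y ≤ 1) (n : ℕ) :
    0 ≤ binRem y n ∧ binRem y n ≤ (1/2 : ℝ)^n := by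
  induction n with
  | zero => simpa [binRem] using ⟨h0, h1⟩
  | succ n ih =>
    rw [binRem]
    split_ifs with h
    · constructor
      · linarith
      · have : (1/2 : ℝ)^(n+1) = (1/2) * (1/2)^n := by ring
        nlinarith [ih.2]
    · exact ⟨ih.1, le_of_not_ge h⟩

lemma binDig_partial (y : ℝ) (n : ℕ) :
    (∑ k ∈ Finset.range n, (if binDig y k then (1/2 : ℝ)^(k+1) else 0)) = y - binRem y n := by
  induction n with
  | zero => simp [binRem]
  | succ n ih =>
    rw [Finset.sum_range_succ, ih, binRem, binDig]
    simp only [decide_eq_true_eq]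
    split_ifs with h <;> ring

lemma sumHalf : Summable (fun n : ℕ => (1/2 : ℝ)^(n+1)) :=
  ((summable_geometric_of_lt_one (by norm_num) (by norm_num : (1/2:ℝ) < 1)).mul_left (1/2)).congr
    (fun n => by ring)

/-- the binary value map -/
noncomputable def binVal (x : ℕ → Bool) : ℝ :=
  ∑' n, (if x n then (1/2 : ℝ)^(n+1) else 0)

lemma binSummable (x : ℕ → Bool) :
    Summable (fun n => (if x n then (1/2 : ℝ)^(n+1) else 0)) :=
  Summable.of_nonneg_of_le
    (fun n => by split_ifs <;> positivity)
    (fun n => by split_ifs with h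
                 · exact le_refl _
                 · positivity)
    sumHalf

lemma binVal_digits {y : ℝ} (h0 : 0 ≤ y) (h1 : y ≤ 1) : binVal (binDig y) = y := by
  have hs := binSummable (binDig y)
  have htend := hs.hasSum.tendsto_sum_nat
  have htend2 : Filter.Tendsto (fun n => ∑ k ∈ Finset.range n,
      (if binDig y k then (1/2 : ℝ)^(k+1) else 0)) Filter.atTop (nhds y) := by
    simp only [binDig_partial]
    have hrem : Filter.Tendsto (fun n => binRem y n) Filter.atTop (nhds 0) := by
      apply squeeze_zero (fun n => (binRem_bounds h0 h1 n).1)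
        (fun n => (binRem_bounds h0 h1 n).2)
      exact tendsto_pow_atTop_nhds_zero_of_lt_one (by norm_num) (by norm_num : (1/2:ℝ) < 1)
    simpa using Filter.Tendsto.sub tendsto_const_nhds hrem
  exact tendsto_nhds_unique htend htend2

lemma binVal_mem (x : ℕ → Bool) : binVal x ∈ Set.Icc (0:ℝ) 1 := by
  constructor
  · apply tsum_nonneg; intro n; split_ifs <;> positivity
  · have h2 : ∑' n : ℕ, (1/2 : ℝ)^(n+1) = 1 := by
      have := tsum_geometric_two' 1
      simpa [div_eq_mul_inv, one_div, pow_succ, mul_comm] using this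
    calc binVal x ≤ ∑' n : ℕ, (1/2 : ℝ)^(n+1) := by
          apply Summable.tsum_le_tsum _ (binSummable x) sumHalf
          intro n; split_ifs with h
          · exact le_refl _
          · positivity
      _ = 1 := h2

lemma binVal_continuous : Continuous binVal := by
  apply continuous_tsum (u := fun n => (1/2 : ℝ)^(n+1))
  · intro n
    exact (continuous_of_discreteTopology (f := fun b : Bool => if b then (1/2:ℝ)^(n+1) else 0)).comp
      (continuous_apply n)
  · exact sumHalf
  · intro n x
    rw [Real.norm_eq_abs, abs_le]
    constructor <;> split_ifs <;> norm_num <;> positivity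


attribute [local instance] Classical.propDecidable

/-- Auxiliary approximation sequence for the retraction of Cantor space onto a closed set. -/
noncomputable def retAux (C : Set (ℕ → Bool)) (x : ℕ → Bool) : ℕ → (ℕ → Bool)
  | 0 => if h : C.Nonempty then h.choose else fun _ => false
  | n + 1 =>
      if h : {y | y ∈ C ∧ (∀ i < n, y i = retAux C x n i) ∧ y n = x n}.Nonempty
      then h.choose else retAux C x n

lemma retAux_mem {C : Set (ℕ → Bool)} (hne : C.Nonempty) (x : ℕ → Bool) (n : ℕ) :
    retAux C x n ∈ C := by
  induction n with
  | zero => rw [retAux, dif_pos hne]; exact hne.choose_spec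
  | succ n ih =>
    rw [retAux]
    split_ifs with h
    · exact h.choose_spec.1
    · exact ih

lemma retAux_agree (C : Set (ℕ → Bool)) (x : ℕ → Bool) (n : ℕ) {i : ℕ} (hi : i < n) :
    retAux C x (n+1) i = retAux C x n i := by
  rw [retAux]
  split_ifs with h
  · exact h.choose_spec.2.1 i hi
  · rfl

lemma retAux_agree' (C : Set (ℕ → Bool)) (x : ℕ → Bool) {m n i : ℕ} (hi : i < n) (hnm : n ≤ m) :
    retAux C x m i = retAux C x n i := by
  induction m with
  | zero => omega
  | succ m ih =>
    rcases Nat.lt_or_ge n (m+1) with h | h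
    · rw [retAux_agree C x m (lt_of_lt_of_le hi (Nat.lt_succ_iff.mp h)), ih (Nat.lt_succ_iff.mp h)]
    · have : n = m + 1 := le_antisymm hnm h
      rw [this]

lemma retAux_fix {C : Set (ℕ → Bool)} {x : ℕ → Bool} (hx : x ∈ C) (n : ℕ) :
    ∀ i < n, retAux C x n i = x i := by
  induction n with
  | zero => omega
  | succ n ih =>
    have hmem : x ∈ {y | y ∈ C ∧ (∀ i < n, y i = retAux C x n i) ∧ y n = x n} :=
      ⟨hx, fun i hi => (ih i hi).symm, rfl⟩
    have hne : {y | y ∈ C ∧ (∀ i < n, y i = retAux C x n i) ∧ y n = x n}.Nonempty := ⟨x, hmem⟩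
    intro i hi
    rw [retAux, dif_pos hne]
    rcases Nat.lt_succ_iff_lt_or_eq.mp hi with h | h
    · rw [hne.choose_spec.2.1 i h, ih i h]
    · rw [h]; exact hne.choose_spec.2.2

lemma retAux_local (C : Set (ℕ → Bool)) {x y : ℕ → Bool} :
    ∀ n, (∀ i < n, x i = y i) → retAux C x n = retAux C y n := by
  intro n
  induction n with
  | zero => intro _; rw [retAux, retAux]
  | succ n ih =>
    intro h
    have h' : retAux C x n = retAux C y n := ih (fun i hi => h i (Nat.lt_succ_of_lt hi))
    rw [retAux, retAux, h', h n (Nat.lt_succ_self n)]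

/-- Every nonempty closed subset of Cantor space is a retract. -/
lemma cantor_retract {C : Set (ℕ → Bool)} (hcl : IsClosed C) (hne : C.Nonempty) :
    ∃ r : (ℕ → Bool) → (ℕ → Bool), Continuous r ∧ (∀ x, r x ∈ C) ∧ ∀ x ∈ C, r x = x := by
  set r : (ℕ → Bool) → (ℕ → Bool) := fun x n => retAux C x (n+1) n with hr
  have hconv : ∀ x, Filter.Tendsto (fun m => retAux C x m) Filter.atTop (nhds (r x)) := by
    intro x
    rw [tendsto_pi_nhds]
    intro i
    apply Filter.Tendsto.congr' (f₁ := fun _ => r x i) _ tendsto_const_nhds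
    filter_upwards [Filter.eventually_ge_atTop (i+1)] with m hm
    exact (retAux_agree' C x (Nat.lt_succ_self i) hm).symm
  refine ⟨r, ?_, ?_, ?_⟩
  · apply continuous_pi
    intro n
    apply IsLocallyConstant.continuous
    rw [IsLocallyConstant.iff_exists_open]
    intro x
    refine ⟨{y | ∀ i ∈ Finset.range (n+1), y i = x i}, ?_, by simp, ?_⟩
    · have : {y : ℕ → Bool | ∀ i ∈ Finset.range (n+1), y i = x i} =
          ⋂ i ∈ Finset.range (n+1), (fun y : ℕ → Bool => y i) ⁻¹' {x i} := by
        ext y; simp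
      rw [this]
      exact isOpen_biInter_finset fun i _ =>
        (continuous_apply i).isOpen_preimage _ (isOpen_discrete _)
    · intro y hy
      show retAux C y (n+1) n = retAux C x (n+1) n
      rw [retAux_local C (n+1) (fun i hi => hy i (Finset.mem_range.mpr hi))]
  · intro x
    exact hcl.mem_of_tendsto (hconv x)
      (Filter.Eventually.of_forall (fun m => retAux_mem hne x m))
  · intro x hx
    funext n
    exact retAux_fix hx (n+1) n (Nat.lt_succ_self n)


/-- The canonical surjection of Cantor space onto the Hilbert cube. -/
noncomputable def cubeMap (x : ℕ → Bool) : ℕ → ℝ := fun n => binVal (fun m => x (Nat.pair n m))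

lemma cubeMap_continuous : Continuous cubeMap :=
  continuous_pi fun _ => binVal_continuous.comp (continuous_pi fun _ => continuous_apply _)

lemma cubeMap_surj (f : ℕ → ℝ) (hf : ∀ n, f n ∈ Set.Icc (0:ℝ) 1) : ∃ x, cubeMap x = f := by
  refine ⟨fun k => binDig (f (Nat.unpair k).1) (Nat.unpair k).2, ?_⟩
  funext n
  show binVal (fun m => binDig (f (Nat.unpair (Nat.pair n m)).1) (Nat.unpair (Nat.pair n m)).2)
      = f n
  simp only [Nat.unpair_pair]
  exact binVal_digits (hf n).1 (hf n).2

/-- Every nonempty compact metric space is homeomorphic to the quotient of Cantor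
space by a closed equivalence relation. -/
theorem stmt_15 (X : Type*) [MetricSpace X] [CompactSpace X] [Nonempty X] :
    ∃ s : Setoid (ℕ → Bool),
      IsClosed {p : (ℕ → Bool) × (ℕ → Bool) | s.r p.1 p.2} ∧
      Nonempty (Quotient s ≃ₜ X) := by
  classical
  -- an injective continuous map into the Hilbert cube
  set u : ℕ → X := denseSeq X with hu
  have hud : DenseRange u := denseRange_denseSeq X
  set g : X → ℕ → ℝ := fun x n => min (dist x (u n)) 1 with hg
  have gcont : Continuous g :=
    continuous_pi fun n => (continuous_id.dist continuous_const).min continuous_const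
  have gmem : ∀ x n, g x n ∈ Set.Icc (0:ℝ) 1 := fun x n =>
    ⟨le_min dist_nonneg zero_le_one, min_le_right _ _⟩
  have ginj : Function.Injective g := by
    intro x y hxy
    have key : ∀ ε : ℝ, 0 < ε → ε ≤ 1 → dist x y < 2 * ε := by
      intro ε hε hε1
      obtain ⟨n, hn⟩ := (Metric.denseRange_iff.mp hud) x ε hε
      have h1 : g x n = dist x (u n) := min_eq_left (le_of_lt (lt_of_lt_of_le hn hε1))
      have h2 : g y n = g x n := by rw [hxy]
      have h3 : dist y (u n) < ε := by
        by_contra h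
        push_neg at h
        have : ε ≤ g y n := le_min h hε1
        rw [h2, h1] at this
        linarith
      calc dist x y ≤ dist x (u n) + dist (u n) y := dist_triangle _ _ _
        _ = dist x (u n) + dist y (u n) := by rw [dist_comm (u n) y]
        _ < 2 * ε := by linarith
    by_contra h
    have hd : 0 < dist x y := dist_pos.mpr h
    rcases le_or_gt (dist x y) 1 with h1 | h1
    · have := key (dist x y / 2) (by linarith) (by linarith)
      linarith
    · have := key (1/2) (by norm_num) (by norm_num)
      linarith
  -- homemorphism onto the range
  have hcr : Continuous (fun x => (Equiv.ofInjective g ginj) x) := by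
    have : Subtype.val ∘ (fun x => (Equiv.ofInjective g ginj) x) = g := by
      funext x; simp
    rw [continuous_induced_rng, this]
    exact gcont
  let e : X ≃ₜ Set.range g := Continuous.homeoOfEquivCompactToT2 hcr
  have hecoe : ∀ x, (e x : ℕ → ℝ) = g x := fun x => by
    simp [e, Continuous.homeoOfEquivCompactToT2]
  -- the closed preimage and a retraction onto it
  have hCclosed : IsClosed (cubeMap ⁻¹' (Set.range g)) :=
    ((isCompact_range gcont).isClosed).preimage cubeMap_continuous
  have hCne : (cubeMap ⁻¹' (Set.range g)).Nonempty := by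
    obtain ⟨x0⟩ := ‹Nonempty X›
    obtain ⟨z, hz⟩ := cubeMap_surj (g x0) (gmem x0)
    exact ⟨z, by rw [Set.mem_preimage, hz]; exact Set.mem_range_self x0⟩
  obtain ⟨r, rcont, hrC, hrfix⟩ := cantor_retract hCclosed hCne
  -- the continuous surjection onto X
  set f : (ℕ → Bool) → X := fun z => e.symm ⟨cubeMap (r z), hrC z⟩ with hf
  have fcont : Continuous f :=
    e.symm.continuous.comp (Continuous.subtype_mk (cubeMap_continuous.comp rcont) _)
  have fsurj : Function.Surjective f := by
    intro x
    obtain ⟨z, hz⟩ := cubeMap_surj (g x) (gmem x)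
    have hzC : z ∈ cubeMap ⁻¹' (Set.range g) := by
      rw [Set.mem_preimage, hz]; exact Set.mem_range_self x
    refine ⟨z, ?_⟩
    show e.symm ⟨cubeMap (r z), hrC z⟩ = x
    have hx : (⟨cubeMap (r z), hrC z⟩ : Set.range g) = e x := by
      apply Subtype.ext
      rw [hecoe]
      show cubeMap (r z) = g x
      rw [hrfix z hzC]
      exact hz
    rw [hx, Homeomorph.symm_apply_apply]
  -- conclusion
  refine ⟨Setoid.ker f, ?_, ?_⟩
  · exact isClosed_eq (fcont.comp continuous_fst) (fcont.comp continuous_snd)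
  · have hE : Continuous (Setoid.quotientKerEquivOfSurjective f fsurj) := by
      exact Continuous.quotient_liftOn' fcont _
    exact ⟨(Continuous.homeoOfEquivCompactToT2 hE).symm.symm⟩
end

section
/- Let (X, ≤) be a complete linear order (every nonempty subset has a supremum and an infimum) with least and greatest elements, and let ∼ be an equivalence relation on X whose classes are order-convex sets of at most two elements, where any two-element class consists of consecutive elements. Then the quotient linear order X/∼ (defined by [x] ≤' [y] iff there are representatives x' ≤ y') is complete and has least and greatest elements. -/
/-- The quotient of a complete linear order with endpoints by an equivalence
relation gluing certain pairs of consecutive elements is complete with endpoints. -/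
theorem stmt_18 {X : Type*} [LinearOrder X]
    (hcomplete : ∀ S : Set X, S.Nonempty →
      (∃ x : X, IsLUB S x) ∧ (∃ x : X, IsGLB S x))
    (bot top : X) (hbot : ∀ x : X, bot ≤ x) (htop : ∀ x : X, x ≤ top)
    (s : Setoid X)
    (hconv : ∀ a b c : X, s.r a b → a ≤ c → c ≤ b → s.r a c)
    (htwo : ∀ a b c : X, s.r a b → s.r a c → (b = c ∨ b = a ∨ c = a))
    (hcons : ∀ a b : X, s.r a b → a < b → ¬ ∃ z, a < z ∧ z < b) :
    let r : Quotient s → Quotient s → Prop :=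
      fun p q => ∃ x y : X, Quotient.mk s x = p ∧ Quotient.mk s y = q ∧ x ≤ y
    (∀ T : Set (Quotient s), T.Nonempty →
      ∃ p : Quotient s, (∀ q ∈ T, r q p) ∧ ∀ p' : Quotient s,
        (∀ q ∈ T, r q p') → r p p') ∧
    (∃ p : Quotient s, ∀ q : Quotient s, r p q) ∧
    (∃ p : Quotient s, ∀ q : Quotient s, r q p) := by
  intro r
  refine ⟨?_, ⟨Quotient.mk s bot, ?_⟩, ⟨Quotient.mk s top, ?_⟩⟩
  · intro T hT
    set S : Set X := {y | Quotient.mk s y ∈ T} with hSdef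
    have hS : S.Nonempty := by
      obtain ⟨q, hq⟩ := hT
      obtain ⟨y, hy⟩ := Quotient.exists_rep q
      exact ⟨y, by simp only [hSdef, Set.mem_setOf_eq, hy]; exact hq⟩
    obtain ⟨x, hx⟩ := (hcomplete S hS).1
    refine ⟨Quotient.mk s x, ?_, ?_⟩
    · intro q hq
      obtain ⟨y, hy⟩ := Quotient.exists_rep q
      exact ⟨y, x, hy, rfl, hx.1 (show y ∈ S by simp only [hSdef, Set.mem_setOf_eq, hy]; exact hq)⟩
    · intro p' hp'
      obtain ⟨z, hz⟩ := Quotient.exists_rep p'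
      have claim : ∀ y ∈ S, ∃ z', s.r z z' ∧ y ≤ z' := by
        intro y hy
        obtain ⟨y', z', hy', hz', hle⟩ := hp' (Quotient.mk s y) hy
        have hyy' : s.r y' y := Quotient.exact hy'
        have hzz' : s.r z z' := s.iseqv.symm (Quotient.exact (hz'.trans hz.symm))
        rcases le_or_gt y z' with h | h
        · exact ⟨z', hzz', h⟩
        · have hy'y : y' < y := lt_of_le_of_lt hle h
          have heq : z' = y' := by
            by_contra hne
            exact hcons y' y hyy' hy'y ⟨z', lt_of_le_of_ne hle (Ne.symm hne), h⟩
          refine ⟨y, s.iseqv.trans hzz' ?_, le_refl y⟩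
          rw [heq]; exact hyy'
      by_cases hw : ∃ w, s.r z w ∧ z < w
      · obtain ⟨w, hzw, hlt⟩ := hw
        have hub : ∀ y ∈ S, y ≤ w := by
          intro y hy
          obtain ⟨z', hz', hle⟩ := claim y hy
          rcases htwo z z' w hz' hzw with h | h | h
          · exact h ▸ hle
          · exact le_trans (h ▸ hle) hlt.le
          · exact absurd (h ▸ hlt) (lt_irrefl z)
        refine ⟨x, w, rfl, ?_, hx.2 hub⟩
        rw [← hz]; exact Quotient.sound (s.iseqv.symm hzw)
      · have hub : ∀ y ∈ S, y ≤ z := by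
          intro y hy
          obtain ⟨z', hz', hle⟩ := claim y hy
          have : z' ≤ z := le_of_not_gt (fun h => hw ⟨z', hz', h⟩)
          exact le_trans hle this
        exact ⟨x, z, rfl, hz, hx.2 hub⟩
  · intro q
    obtain ⟨y, hy⟩ := Quotient.exists_rep q
    exact ⟨bot, y, rfl, hy, hbot y⟩
  · intro q
    obtain ⟨y, hy⟩ := Quotient.exists_rep q
    exact ⟨y, top, hy, rfl, htop y⟩
end
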